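/- Let SG be the Sierpiński gasket generated from an equilateral triangle of side 1, and for k ≥ 1 let Δ_k be the 3^{k-1} open equilateral triangles of side 2^{-k} removed at step k. Let g = 1/(4√3). Define β₁(SG;t) = 3/2 + Σ_{k : g·2^{-k+1} > t} 3^{k-1} · 3(2^{-k-1} − √3 t) (summing contributions of visible removed triangles). Then, with D = log₂3, there exist constants 0 < c₁ ≤ c₂ < ∞ such that c₁ ≤ t^{D−1} β₁(SG;t) ≤ c₂ for all sufficiently small t > 0; explicitly c₁ = (15/16) g^{D−1} works as lower bound and c₂ = (3/2) g^{1−D} as t^{1−D} upper bound constant. In particular, inf{q : limsup_{t→0⁺} t^{q−1} β₁(SG;t) = 0} = log₂3. -/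

import Mathlib

/-!
Every small `t > 0` lies in a dyadic band `t = g·x·2⁻ⁿ` with `1 ≤ x < 2`, where exactly the levels
`k = 1, …, n` contribute, and the geometric sums give `β₁(SG;t) = (3/2)ⁿ⁺¹ - x(3ⁿ⁺¹ - 3)/(8·2ⁿ)`.
Since `2^(D-1) = 3/2`, the factor `t^(D-1)` contributes `(3/2)⁻ⁿ`, which cancels the growth in `n`:
`t^(D-1) β₁(SG;t) = g^(D-1) x^(D-1) ((3/2)(1 - x/4) + 3x/(8·3ⁿ))`. Both bounds are then estimates
for `x ∈ [1,2)` that need only `3/2 ≤ D`, i.e. `8 ≤ 9`: below, `x^(D-1) ≥ √x` and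
`√x (1 - x/4) ≥ 5/8`; above, `x^(D-1) ≤ 2^(D-1)` and `g^(D-1) ≤ √g ≤ 1/2`.
Once `t^(D-1) β₁` is pinched between positive constants, `t^(q-1) β₁ = t^(q-D) · t^(D-1) β₁`
tends to `0` for `q > D` and stays above a positive constant for `q ≤ D`.
-/

open Filter Set Topology

noncomputable section

/-- The inradius `g = 1/(4√3)` of the first removed triangle of the Sierpiński
gasket. -/
def gSG : ℝ := 1 / (4 * Real.sqrt 3)

/-- The first basic function of the Sierpiński gasket: `β₁(SG;t)` is `3/2` plus the
sum over all levels `k ≥ 1` with `g·2^{-k+1} > t` of the contributions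
`3^{k-1}·3(2^{-k-1} − √3 t)` of the `3^{k-1}` removed triangles of side `2^{-k}`. -/
def betaSG (t : ℝ) : ℝ :=
  3 / 2 + ∑' k : ℕ,
    if 1 ≤ k ∧ t < gSG * (2:ℝ) ^ (1 - (k : ℝ)) then
      (3:ℝ) ^ ((k : ℝ) - 1) * 3 * ((2:ℝ) ^ (-(k : ℝ) - 1) - Real.sqrt 3 * t)
    else 0

lemma gSG_pos : 0 < gSG := by
  unfold gSG; positivity

lemma sqrt_three_mul_gSG : √3 * gSG = 1 / 4 := by
  unfold gSG
  field_simp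

lemma gSG_le_one_fourth : gSG ≤ 1 / 4 := by
  unfold gSG
  gcongr
  linarith [Real.one_le_sqrt.mpr (by norm_num : (1:ℝ) ≤ 3)]

lemma three_halves_le_logb_two_three : 3 / 2 ≤ Real.logb 2 3 := by
  rw [Real.le_logb_iff_rpow_le one_lt_two three_pos]
  refine le_of_pow_le_pow_left₀ two_ne_zero (by norm_num) ?_
  rw [← Real.rpow_natCast, ← Real.rpow_mul zero_le_two]
  norm_num

lemma two_rpow_logb_two_three_sub_one : (2:ℝ) ^ (Real.logb 2 3 - 1) = 3 / 2 := by
  rw [Real.rpow_sub_one two_ne_zero, Real.rpow_logb two_pos (by norm_num) three_pos]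

lemma mul_two_pow_lt_two_pow_succ_iff {x : ℝ} (hx : x ∈ Ico 1 2) {k n : ℕ} :
    x * 2 ^ k < 2 ^ (n + 1) ↔ k ≤ n := by
  constructor
  · intro h
    by_contra! hnk
    have : (2:ℝ) ^ (n + 1) ≤ 2 ^ k := pow_le_pow_right₀ one_le_two hnk
    nlinarith [hx.1, pow_pos (two_pos : (0:ℝ) < 2) k]
  · intro hkn
    calc x * 2 ^ k < 2 * 2 ^ k := by gcongr; exact hx.2
      _ = 2 ^ (k + 1) := by ring
      _ ≤ 2 ^ (n + 1) := pow_le_pow_right₀ one_le_two (by omega)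

lemma sum_Icc_three_pow_mul (s : ℝ) (n : ℕ) :
    ∑ k ∈ Finset.Icc 1 n, (3:ℝ) ^ k * ((2 ^ (k + 1))⁻¹ - s)
      = (3 / 2) ^ (n + 1) - 3 / 2 - s * (3 ^ (n + 1) - 3) / 2 := by
  induction n with
  | zero => simp
  | succ n ih =>
    rw [Finset.sum_Icc_succ_top (by omega), ih]
    simp only [div_pow]
    field_simp
    ring

lemma betaSG_summand_eq {x : ℝ} (hx : x ∈ Ico 1 2) (n k : ℕ) :
    (if 1 ≤ k ∧ gSG * x / 2 ^ n < gSG * (2:ℝ) ^ (1 - (k : ℝ)) then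
      (3:ℝ) ^ ((k : ℝ) - 1) * 3 * ((2:ℝ) ^ (-(k : ℝ) - 1) - √3 * (gSG * x / 2 ^ n))
    else 0) =
    if k ∈ Finset.Icc 1 n then (3:ℝ) ^ k * ((2 ^ (k + 1))⁻¹ - √3 * (gSG * x / 2 ^ n))
    else 0 := by
  have hlevel : gSG * x / 2 ^ n < gSG * (2:ℝ) ^ (1 - (k : ℝ)) ↔ k ≤ n := by
    rw [← mul_two_pow_lt_two_pow_succ_iff hx, Real.rpow_sub two_pos, Real.rpow_one,
      Real.rpow_natCast, mul_div_assoc, mul_lt_mul_iff_right₀ gSG_pos,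
      div_lt_div_iff₀ (by positivity) (by positivity)]
    ring_nf
  have h3 : (3:ℝ) ^ ((k : ℝ) - 1) * 3 = 3 ^ k := by
    rw [Real.rpow_sub_one three_ne_zero, Real.rpow_natCast, div_mul_cancel₀ _ three_ne_zero]
  have h2 : (2:ℝ) ^ (-(k : ℝ) - 1) = (2 ^ (k + 1))⁻¹ := by
    rw [Real.rpow_sub_one two_ne_zero, Real.rpow_neg zero_le_two, Real.rpow_natCast]
    ring
  simp only [Finset.mem_Icc, hlevel, h3, h2]

lemma betaSG_gSG_mul_div_two_pow {x : ℝ} (hx : x ∈ Ico 1 2) (n : ℕ) :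
    betaSG (gSG * x / 2 ^ n) = (3 / 2) ^ (n + 1) - x * (3 ^ (n + 1) - 3) / (8 * 2 ^ n) := by
  have hscale : √3 * (gSG * x / 2 ^ n) = x / (4 * 2 ^ n) := by
    rw [mul_div_assoc, ← mul_assoc, sqrt_three_mul_gSG]
    ring
  rw [betaSG, tsum_congr (betaSG_summand_eq hx n), tsum_eq_sum (s := Finset.Icc 1 n)
    (fun k hk => if_neg hk), Finset.sum_ite_mem, Finset.inter_self, sum_Icc_three_pow_mul,
    hscale]
  simp only [div_pow]
  field_simp
  ring

lemma exists_eq_mul_div_two_pow {c t : ℝ} (hc : 0 < c) (ht : 0 < t) (htc : t < 2 * c) :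
    ∃ n : ℕ, ∃ x ∈ Ico (1:ℝ) 2, t = c * x / 2 ^ n := by
  obtain ⟨m, hm₁, hm₂⟩ := exists_mem_Ico_zpow (div_pos ht hc) one_lt_two
  have hm : m ≤ 0 := by
    have : (2:ℝ) ^ m < 2 ^ (1:ℤ) := by
      rw [zpow_one]
      exact hm₁.trans_lt ((div_lt_iff₀ hc).mpr (by linarith))
    have := (zpow_lt_zpow_iff_right₀ one_lt_two).mp this
    omega
  obtain ⟨n, rfl⟩ := Int.exists_eq_neg_ofNat hm
  rw [zpow_neg, zpow_natCast] at hm₁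
  rw [neg_add_eq_sub, zpow_sub₀ two_ne_zero, zpow_one, zpow_natCast] at hm₂
  refine ⟨n, t / c * 2 ^ n, ⟨(inv_le_iff_one_le_mul₀ (by positivity)).mp hm₁, ?_⟩, by field_simp⟩
  rwa [lt_div_iff₀ (by positivity)] at hm₂

lemma rpow_mul_betaSG_gSG_mul_div_two_pow {x : ℝ} (hx : x ∈ Ico 1 2) (n : ℕ) :
    (gSG * x / 2 ^ n) ^ (Real.logb 2 3 - 1) * betaSG (gSG * x / 2 ^ n)
      = gSG ^ (Real.logb 2 3 - 1) *
          (x ^ (Real.logb 2 3 - 1) * (3 / 2 * (1 - x / 4) + 3 * x / (8 * 3 ^ n))) := by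
  have hpow : ((2:ℝ) ^ n) ^ (Real.logb 2 3 - 1) = (3 / 2) ^ n := by
    rw [← Real.rpow_natCast, ← Real.rpow_mul zero_le_two, mul_comm, Real.rpow_mul zero_le_two,
      two_rpow_logb_two_three_sub_one, Real.rpow_natCast]
  have hx₀ : 0 ≤ x := by linarith [hx.1]
  rw [Real.div_rpow (mul_nonneg gSG_pos.le hx₀) (by positivity), Real.mul_rpow gSG_pos.le hx₀,
    hpow, betaSG_gSG_mul_div_two_pow hx]
  simp only [div_pow]
  field_simp
  ring

lemma fifteen_sixteenths_le_rpow_mul {a x : ℝ} (ha : 1 / 2 ≤ a) (hx : x ∈ Ico 1 2) (n : ℕ) :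
    15 / 16 ≤ x ^ a * (3 / 2 * (1 - x / 4) + 3 * x / (8 * 3 ^ n)) := by
  have hsqrt : √x ≤ x ^ a := by
    rw [Real.sqrt_eq_rpow]
    exact Real.rpow_le_rpow_of_exponent_le hx.1 ha
  have hprofile : 5 / 8 ≤ √x * (1 - x / 4) := by
    have hs : √x ^ 2 = x := Real.sq_sqrt (by linarith [hx.1])
    have hs₁ : 1 ≤ √x := Real.one_le_sqrt.mpr hx.1
    nlinarith [hx.2, mul_nonneg (sub_nonneg.mpr hs₁) (sub_nonneg.mpr hx.2.le)]
  calc 15 / 16 ≤ √x * (3 / 2 * (1 - x / 4)) := by linarith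
    _ ≤ x ^ a * (3 / 2 * (1 - x / 4) + 3 * x / (8 * 3 ^ n)) := by
      refine mul_le_mul hsqrt (le_add_of_nonneg_right ?_) ?_
        (Real.rpow_nonneg (by linarith [hx.1]) a)
      · exact div_nonneg (by linarith [hx.1]) (by positivity)
      · linarith [hx.2]

lemma rpow_mul_le_nine_fourths {x : ℝ} (hx : x ∈ Ico 1 2) (n : ℕ) :
    x ^ (Real.logb 2 3 - 1) * (3 / 2 * (1 - x / 4) + 3 * x / (8 * 3 ^ n)) ≤ 9 / 4 := by
  have hx₀ : 0 ≤ x := by linarith [hx.1]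
  have hrpow : x ^ (Real.logb 2 3 - 1) ≤ 3 / 2 := by
    rw [← two_rpow_logb_two_three_sub_one]
    exact Real.rpow_le_rpow hx₀ hx.2.le (by linarith [three_halves_le_logb_two_three])
  have hlevels : 3 * x / (8 * 3 ^ n) ≤ 3 * x / 8 :=
    div_le_div_of_nonneg_left (by positivity) (by norm_num)
      (le_mul_of_one_le_right (by norm_num) (one_le_pow₀ (by norm_num)))
  have hlevels₀ : 0 ≤ 3 * x / (8 * 3 ^ n) := div_nonneg (by linarith) (by positivity)
  calc x ^ (Real.logb 2 3 - 1) * (3 / 2 * (1 - x / 4) + 3 * x / (8 * 3 ^ n))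
      ≤ 3 / 2 * (3 / 2) :=
        mul_le_mul hrpow (by linarith) (by linarith [hx.2]) (by norm_num)
    _ = 9 / 4 := by norm_num

lemma nine_fourths_mul_gSG_rpow_le :
    9 / 4 * gSG ^ (Real.logb 2 3 - 1) ≤ 3 / 2 * gSG ^ (1 - Real.logb 2 3) := by
  have hg : 0 < gSG ^ (Real.logb 2 3 - 1) := Real.rpow_pos_of_pos gSG_pos _
  have hg_le : gSG ^ (Real.logb 2 3 - 1) ≤ 1 / 2 :=
    calc gSG ^ (Real.logb 2 3 - 1) ≤ gSG ^ (1 / 2 : ℝ) :=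
          Real.rpow_le_rpow_of_exponent_ge gSG_pos (by linarith [gSG_le_one_fourth])
            (by linarith [three_halves_le_logb_two_three])
      _ ≤ 1 / 2 := by
          rw [← Real.sqrt_eq_rpow, Real.sqrt_le_iff]
          constructor <;> linarith [gSG_le_one_fourth]
  rw [show 1 - Real.logb 2 3 = -(Real.logb 2 3 - 1) by ring, Real.rpow_neg gSG_pos.le,
    ← div_eq_mul_inv, le_div_iff₀ hg]
  nlinarith

lemma rpow_mul_betaSG_bounds {t : ℝ} (ht : t ∈ Ioo 0 gSG) :
    15 / 16 * gSG ^ (Real.logb 2 3 - 1) ≤ t ^ (Real.logb 2 3 - 1) * betaSG t ∧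
      t ^ (Real.logb 2 3 - 1) * betaSG t ≤ 3 / 2 * gSG ^ (1 - Real.logb 2 3) := by
  obtain ⟨n, x, hx, rfl⟩ :=
    exists_eq_mul_div_two_pow gSG_pos ht.1 (by linarith [ht.2, gSG_pos])
  have hg : 0 < gSG ^ (Real.logb 2 3 - 1) := Real.rpow_pos_of_pos gSG_pos _
  rw [rpow_mul_betaSG_gSG_mul_div_two_pow hx]
  constructor
  · rw [mul_comm]
    exact mul_le_mul_of_nonneg_left
      (fifteen_sixteenths_le_rpow_mul (by linarith [three_halves_le_logb_two_three]) hx n) hg.le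
  · calc _ ≤ gSG ^ (Real.logb 2 3 - 1) * (9 / 4) :=
          mul_le_mul_of_nonneg_left (rpow_mul_le_nine_fourths hx n) hg.le
      _ ≤ _ := by linarith [nine_fourths_mul_gSG_rpow_le]

lemma rpow_sub_one_eq_rpow_sub_mul {t : ℝ} (ht : 0 < t) (D q : ℝ) :
    t ^ (q - 1) = t ^ (q - D) * t ^ (D - 1) := by
  rw [← Real.rpow_add ht]
  ring_nf

section ScalingExponent

variable {f : ℝ → ℝ} {D c₁ c₂ q : ℝ}

lemma limsup_rpow_mul_eq_zero_of_lt
    (hf : ∀ᶠ t in 𝓝[>] 0, c₁ ≤ t ^ (D - 1) * f t ∧ t ^ (D - 1) * f t ≤ c₂) (hq : D < q) :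
    limsup (fun t : ℝ => ((t ^ (q - 1) * f t : ℝ) : EReal)) (𝓝[>] 0) = 0 := by
  have hpow : Tendsto (fun t : ℝ => t ^ (q - D)) (𝓝[>] 0) (𝓝 0) := by
    have := (Real.continuousAt_rpow_const 0 (q - D) (Or.inr (sub_pos.2 hq).le)).tendsto
    rw [Real.zero_rpow (sub_pos.2 hq).ne'] at this
    exact this.mono_left nhdsWithin_le_nhds
  have hbdd : IsBoundedUnder (· ≤ ·) (𝓝[>] 0) (fun t => ‖t ^ (D - 1) * f t‖) :=
    isBoundedUnder_of_eventually_le (a := max |c₁| |c₂|)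
      (hf.mono fun t ht => abs_le_max_abs_abs ht.1 ht.2)
  have hlim : Tendsto (fun t => t ^ (q - 1) * f t) (𝓝[>] 0) (𝓝 0) :=
    (hpow.zero_mul_isBoundedUnder_le hbdd).congr' <| eventually_mem_nhdsWithin.mono fun t ht => by
      dsimp only
      rw [rpow_sub_one_eq_rpow_sub_mul ht D q, mul_assoc]
  exact_mod_cast (EReal.tendsto_coe.mpr hlim).limsup_eq

lemma le_limsup_rpow_mul_of_le (hf : ∀ᶠ t in 𝓝[>] 0, c₁ ≤ t ^ (D - 1) * f t) (hc₁ : 0 ≤ c₁)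
    (hq : q ≤ D) :
    (c₁ : EReal) ≤ limsup (fun t : ℝ => ((t ^ (q - 1) * f t : ℝ) : EReal)) (𝓝[>] 0) := by
  refine le_limsup_of_frequently_le' (Eventually.frequently ?_)
  filter_upwards [hf, Ioo_mem_nhdsGT one_pos] with t ht ht'
  rw [EReal.coe_le_coe_iff, rpow_sub_one_eq_rpow_sub_mul ht'.1 D q, mul_assoc]
  exact ht.trans <| le_mul_of_one_le_left (hc₁.trans ht) <|
    Real.one_le_rpow_of_pos_of_le_one_of_nonpos ht'.1 ht'.2.le (by linarith)

lemma sInf_setOf_limsup_rpow_mul_eq_zero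
    (hf : ∀ᶠ t in 𝓝[>] 0, c₁ ≤ t ^ (D - 1) * f t ∧ t ^ (D - 1) * f t ≤ c₂) (hc₁ : 0 < c₁) :
    sInf {q : ℝ | limsup (fun t : ℝ => ((t ^ (q - 1) * f t : ℝ) : EReal)) (𝓝[>] 0) = 0} = D := by
  suffices h : {q : ℝ | limsup (fun t : ℝ => ((t ^ (q - 1) * f t : ℝ) : EReal)) (𝓝[>] 0) = 0}
      = Ioi D by rw [h, csInf_Ioi]
  ext q
  refine ⟨fun hq => ?_, limsup_rpow_mul_eq_zero_of_lt hf⟩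
  by_contra hqD
  have := le_limsup_rpow_mul_of_le (hf.mono fun _ ht => ht.1) hc₁.le (not_lt.mp hqD)
  rw [hq] at this
  exact (EReal.coe_pos.mpr hc₁).not_ge this

end ScalingExponent

/-- with `D = log₂ 3`, for all sufficiently small `t > 0` one has
`(15/16)·g^{D−1} ≤ t^{D−1} β₁(SG;t) ≤ (3/2)·g^{1−D}`; in particular the first basic
scaling exponent `inf{q : limsup_{t→0⁺} t^{q−1} β₁(SG;t) = 0}` equals `log₂ 3`. -/
theorem sierpinski_gasket_beta_one :
    (∃ t₀ > (0:ℝ), ∀ t ∈ Set.Ioo (0:ℝ) t₀,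
      (15 / 16) * gSG ^ (Real.logb 2 3 - 1) ≤ t ^ (Real.logb 2 3 - 1) * betaSG t ∧
      t ^ (Real.logb 2 3 - 1) * betaSG t ≤ (3 / 2) * gSG ^ (1 - Real.logb 2 3)) ∧
    sInf {q : ℝ |
        Filter.limsup (fun t : ℝ => ((t ^ (q - 1) * betaSG t : ℝ) : EReal)) (𝓝[>] 0)
          = (0 : EReal)} = Real.logb 2 3 := by
  have hbounds : ∀ᶠ t in 𝓝[>] 0,
      (15 / 16) * gSG ^ (Real.logb 2 3 - 1) ≤ t ^ (Real.logb 2 3 - 1) * betaSG t ∧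
      t ^ (Real.logb 2 3 - 1) * betaSG t ≤ (3 / 2) * gSG ^ (1 - Real.logb 2 3) := by
    filter_upwards [Ioo_mem_nhdsGT gSG_pos] with t ht using rpow_mul_betaSG_bounds ht
  exact ⟨⟨gSG, gSG_pos, fun _ => rpow_mul_betaSG_bounds⟩,
    sInf_setOf_limsup_rpow_mul_eq_zero hbounds
      (mul_pos (by norm_num) (Real.rpow_pos_of_pos gSG_pos _))⟩
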